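/- arXiv:2212.13698 — 2 statements merged into one kernel-verified Lean document; each statement's English description precedes it below -/
import Mathlib

section
/- Let Ω ⊂ ℝⁿ (n≥2) be a domain, h a harmonic function in Ω, and let 0<ε_0<1, 1<p_0, σ(t) = (ε_0 − t)^{−ε_0/p_0} for −1 < t ≤ 0. Then the pair u(x,t) = ∇h(x)σ(t), π(x,t) = −h(x)σ'(t) satisfies u_t − Δu + ∇π = 0 and div u = 0 in Ω×(−1,0]. Moreover ∫_{−1}^0 σ(t)^{p_0} dt < 2 and ∫_{−1}^0 σ'(t) dt < 2, while for p = 2p_0/ε_0 the integral ∫_{−1}^0 σ(t)^{p} dt admits no bound uniform in ε_0 as ε_0 → 0. -/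
open MeasureTheory Metric Set

noncomputable section

/-- Points of space `ℝⁿ` (with the Euclidean metric). -/
abbrev Pt (n : ℕ) := EuclideanSpace ℝ (Fin n)

/-- Euclidean magnitude of a vector given componentwise. -/
def vMag (n : ℕ) (v : Fin n → ℝ) : ℝ := Real.sqrt (∑ i, (v i) ^ 2)

/-- Euclidean (Frobenius) magnitude of a matrix given componentwise. -/
def mMag (n : ℕ) (m : Fin n → Fin n → ℝ) : ℝ := Real.sqrt (∑ i, ∑ j, (m i j) ^ 2)

/-- Euclidean magnitude of a 3-tensor given componentwise. -/
def tMag (n : ℕ) (m : Fin n → Fin n → Fin n → ℝ) : ℝ :=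
  Real.sqrt (∑ k, ∑ i, ∑ j, (m k i j) ^ 2)

/-- Spatial partial derivative `D_j v` of a scalar function on space-time. -/
def Dsp (n : ℕ) (v : Pt n × ℝ → ℝ) (z : Pt n × ℝ) (j : Fin n) : ℝ :=
  fderiv ℝ (fun y => v (y, z.2)) z.1 (EuclideanSpace.single j 1)

/-- Second spatial partial derivative `D_{ij} v` of a scalar function on space-time. -/
def Dsp2 (n : ℕ) (v : Pt n × ℝ → ℝ) (z : Pt n × ℝ) (i j : Fin n) : ℝ :=
  fderiv ℝ (fun y => Dsp n v (y, z.2) j) z.1 (EuclideanSpace.single i 1)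

/-- Time derivative `v_t` of a scalar function on space-time. -/
def Dt (n : ℕ) (v : Pt n × ℝ → ℝ) (z : Pt n × ℝ) : ℝ :=
  deriv (fun s => v (z.1, s)) z.2

/-- Spatial gradient matrix `Du = (D_j u_i)` of a vector field. -/
def gradm (n : ℕ) (u : Pt n × ℝ → Fin n → ℝ) (z : Pt n × ℝ) : Fin n → Fin n → ℝ :=
  fun i j => Dsp n (fun w => u w i) z j

/-- Spatial Hessian tensor `D²u = (D_{ij} u_k)` of a vector field. -/
def hessm (n : ℕ) (u : Pt n × ℝ → Fin n → ℝ) (z : Pt n × ℝ) : Fin n → Fin n → Fin n → ℝ :=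
  fun k i j => Dsp2 n (fun w => u w k) z i j

/-- The antisymmetrized gradient `∇×u = (D_j u_i − D_i u_j)`. -/
def curlm (n : ℕ) (u : Pt n × ℝ → Fin n → ℝ) (z : Pt n × ℝ) : Fin n → Fin n → ℝ :=
  fun i j => Dsp n (fun w => u w i) z j - Dsp n (fun w => u w j) z i

/-- Spatial divergence of a vector field. -/
def divg (n : ℕ) (u : Pt n × ℝ → Fin n → ℝ) (z : Pt n × ℝ) : ℝ :=
  ∑ i, Dsp n (fun w => u w i) z i

/-- Magnitude of the spatial gradient `D∇×u` of the antisymmetrized gradient. -/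
def dcurlMag (n : ℕ) (u : Pt n × ℝ → Fin n → ℝ) (z : Pt n × ℝ) : ℝ :=
  Real.sqrt (∑ i, ∑ j, ∑ k, (Dsp n (fun w => curlm n u w i j) z k) ^ 2)

/-- The parabolic cylinder `Q_r(x,t) = B_r(x) × (t−r², t]`. -/
def pQ (n : ℕ) (r : ℝ) (z : Pt n × ℝ) : Set (Pt n × ℝ) :=
  (ball z.1 r) ×ˢ Ioc (z.2 - r ^ 2) z.2

/-- The centered parabolic cylinder `K_r(x,t) = B_r(x) × (t−r²/2, t+r²/2]`. -/
def pK (n : ℕ) (r : ℝ) (z : Pt n × ℝ) : Set (Pt n × ℝ) :=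
  (ball z.1 r) ×ˢ Ioc (z.2 - r ^ 2 / 2) (z.2 + r ^ 2 / 2)

/-- `L^p` membership on a subset of space-time (for a real exponent `p`). -/
def MemLpOn {α : Type*} [MeasureSpace α] (v : α → ℝ) (p : ℝ) (s : Set α) : Prop :=
  MemLp v (ENNReal.ofReal p) (volume.restrict s)

/-- The `L^p` norm of a function on a subset of space-time (for a real exponent `p`). -/
def LpN {α : Type*} [MeasureSpace α] (v : α → ℝ) (p : ℝ) (s : Set α) : ℝ :=
  (eLpNorm v (ENNReal.ofReal p) (volume.restrict s)).toReal

/-- Condition (H1): uniform ellipticity and boundedness of the coefficient matrix `A`. -/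
def EllipH1 (n : ℕ) (A : Pt n × ℝ → Fin n → Fin n → ℝ) (lam : ℝ)
    (S : Set (Pt n × ℝ)) : Prop :=
  ∀ z ∈ S, (∀ ξ : Fin n → ℝ, lam * (∑ i, (ξ i) ^ 2) ≤ ∑ i, ∑ j, A z i j * ξ i * ξ j) ∧
    (∀ i j, |A z i j| ≤ lam⁻¹)

/-- `[A]_{C^γ_x(S)} ≤ B` : Hölder continuity of the coefficients in the spatial variables. -/
def HolderX (n : ℕ) (A : Pt n × ℝ → Fin n → Fin n → ℝ) (γ B : ℝ)
    (S : Set (Pt n × ℝ)) : Prop :=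
  ∀ x y : Pt n, ∀ t : ℝ, (x, t) ∈ S → (y, t) ∈ S →
    ∀ i j, |A (x, t) i j - A (y, t) i j| ≤ B * dist x y ^ γ

/-- `u` (with pressure `π`) is a weak solution of the divergence-form Stokes system
`u_t − D_i(a^{ij} D_j u) + ∇π = div f`, `div u = g` in `Ω_T = Ω × (−T,0]`. -/
def IsWeakStokesDiv (n : ℕ) (A : Pt n × ℝ → Fin n → Fin n → ℝ)
    (u : Pt n × ℝ → Fin n → ℝ) (pr : Pt n × ℝ → ℝ)
    (f : Pt n × ℝ → Fin n → Fin n → ℝ) (g : Pt n × ℝ → ℝ)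
    (Ω : Set (Pt n)) (T : ℝ) : Prop :=
  (∀ φ : Pt n × ℝ → Fin n → ℝ, ContDiff ℝ (⊤ : ℕ∞) φ → HasCompactSupport φ →
      tsupport φ ⊆ Ω ×ˢ Ioo (-T) 0 →
      ∫ z in Ω ×ˢ Ioc (-T) 0,
        (∑ k, (- u z k * Dt n (fun w => φ w k) z
          + ∑ i, ∑ j, A z i j * Dsp n (fun w => u w k) z j * Dsp n (fun w => φ w k) z i
          - pr z * Dsp n (fun w => φ w k) z k))
      = ∫ z in Ω ×ˢ Ioc (-T) 0, (- ∑ k, ∑ i, f z i k * Dsp n (fun w => φ w k) z i)) ∧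
  (∀ᵐ z ∂(volume.restrict (Ω ×ˢ Ioc (-T) 0)), divg n u z = g z)

/-- `u` (with pressure gradient `pgrad`) solves the non-divergence-form Stokes system
`u_t − a^{ij} D_{ij} u + ∇π = f`, `div u = g` in `Ω_T = Ω × (−T,0]`. -/
def IsStokesNonDiv (n : ℕ) (A : Pt n × ℝ → Fin n → Fin n → ℝ)
    (u : Pt n × ℝ → Fin n → ℝ) (pgrad : Pt n × ℝ → Fin n → ℝ)
    (f : Pt n × ℝ → Fin n → ℝ) (g : Pt n × ℝ → ℝ)
    (Ω : Set (Pt n)) (T : ℝ) : Prop :=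
  ∀ z ∈ Ω ×ˢ Ioc (-T) 0,
    (∀ k, Dt n (fun w => u w k) z
        - (∑ i, ∑ j, A z i j * Dsp2 n (fun w => u w k) z i j)
        + pgrad z k = f z k) ∧
    divg n u z = g z

/-- The parabolic Hardy–Littlewood maximal function over `Q_7`. -/
def maxFn (n : ℕ) (v : Pt n × ℝ → ℝ) (z : Pt n × ℝ) : ℝ :=
  ⨆ (ρ : ℝ) (_ : 0 < ρ), ⨍ w in pK n ρ z ∩ pQ n 7 0, |v w| ∂volume

/-- The quantity `Θ(x,t) = sup_{r>0} r^{q₀(γ−1)} ⨍_{K_r(x,t)∩Q_7} |u − ū_{B_r(x)}(s)|^{q₀}`. -/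
def Theta (n : ℕ) (q0 γ : ℝ) (u : Pt n × ℝ → Fin n → ℝ) (z : Pt n × ℝ) : ℝ :=
  ⨆ (r : ℝ) (_ : 0 < r), r ^ (q0 * (γ - 1)) *
    ⨍ w in pK n r z ∩ pQ n 7 0,
      vMag n (fun k => u w k - ⨍ y in ball z.1 r, u (y, w.2) k ∂volume) ^ q0 ∂volume

/-- The quantity `Θ` built from `Du` instead of `u` (non-divergence case). -/
def ThetaD (n : ℕ) (q0 γ : ℝ) (u : Pt n × ℝ → Fin n → ℝ) (z : Pt n × ℝ) : ℝ :=
  ⨆ (r : ℝ) (_ : 0 < r), r ^ (q0 * (γ - 1)) *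
    ⨍ w in pK n r z ∩ pQ n 7 0,
      mMag n (fun i j => gradm n u w i j
        - ⨍ y in ball z.1 r, gradm n u (y, w.2) i j ∂volume) ^ q0 ∂volume


/-- The function `σ(t) = (ε₀ − t)^{−ε₀/p₀}` of Serrin's counterexample. -/
def serrinSigma (ε0 p0 t : ℝ) : ℝ := (ε0 - t) ^ (-(ε0 / p0))

/- ### Auxiliary lemmas for Serrin's counterexample -/

section SerrinAux

private lemma serrin_sigma_hasDerivAt (ε0 p0 t : ℝ) (ht : t < ε0) :
    HasDerivAt (serrinSigma ε0 p0) ((ε0 / p0) * (ε0 - t) ^ (-(ε0 / p0) - 1)) t := by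
  have h1 : HasDerivAt (fun s : ℝ => ε0 - s) (-1) t := by
    simpa using (hasDerivAt_id t).const_sub ε0
  have h2 := (Real.hasDerivAt_rpow_const (p := -(ε0 / p0)) (x := ε0 - t)
    (Or.inl (by linarith))).comp t h1
  unfold serrinSigma
  exact h2.congr_deriv (by ring)

private lemma serrin_integral_rpow_sub (ε0 q : ℝ) (hε : 0 < ε0) (hq : q + 1 ≠ 0) :
    ∫ t in Ioc (-1:ℝ) 0, (ε0 - t) ^ q = ((1 + ε0) ^ (q + 1) - ε0 ^ (q + 1)) / (q + 1) := by
  have hle : (-1:ℝ) ≤ 0 := by norm_num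
  have hder : ∀ t ∈ uIcc (-1:ℝ) 0,
      HasDerivAt (fun t : ℝ => -(ε0 - t) ^ (q + 1) / (q + 1)) ((ε0 - t) ^ q) t := by
    intro t ht
    rw [uIcc_of_le hle] at ht
    have hpos : 0 < ε0 - t := by have := ht.2; linarith
    have h1 : HasDerivAt (fun s : ℝ => ε0 - s) (-1) t := by
      simpa using (hasDerivAt_id t).const_sub ε0
    have h2 := (Real.hasDerivAt_rpow_const (p := q + 1) (x := ε0 - t)
      (Or.inl hpos.ne')).comp t h1
    have h3 := (h2.neg).div_const (q + 1)
    exact h3.congr_deriv (by rw [add_sub_cancel_right]; field_simp)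
  have hcont : ContinuousOn (fun t : ℝ => (ε0 - t) ^ q) (uIcc (-1:ℝ) 0) := by
    apply ContinuousOn.rpow_const
    · exact (continuous_const.sub continuous_id).continuousOn
    · intro t ht
      rw [uIcc_of_le hle] at ht
      exact Or.inl (by have := ht.2; simp; linarith)
  have := intervalIntegral.integral_eq_sub_of_hasDerivAt hder (hcont.intervalIntegrable)
  rw [← intervalIntegral.integral_of_le hle, this]
  have h0 : ε0 - 0 = ε0 := by ring
  have h1 : ε0 - (-1) = 1 + ε0 := by ring
  rw [h0, h1]
  ring

private lemma serrin_rpow_self_lt_two (ε0 p0 : ℝ) (hε : 0 < ε0) (hε1 : ε0 < 1) (hp0 : 1 < p0) :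
    ε0 ^ (-(ε0 / p0)) < 2 := by
  rw [Real.rpow_def_of_pos hε]
  have h2 : (2:ℝ) = Real.exp (Real.log 2) := (Real.exp_log (by norm_num)).symm
  rw [h2, Real.exp_lt_exp]
  have hL : 0 < -Real.log ε0 := by
    have := Real.log_neg hε hε1; linarith
  have hLe : ε0 * (-Real.log ε0) ≤ (Real.exp 1)⁻¹ := by
    have hx : (0:ℝ) < ε0⁻¹ * (Real.exp 1)⁻¹ := by positivity
    have h1 := Real.log_le_sub_one_of_pos hx
    rw [Real.log_mul (by positivity) (by positivity), Real.log_inv, Real.log_inv,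
      Real.log_exp] at h1
    have h2 : -Real.log ε0 ≤ ε0⁻¹ * (Real.exp 1)⁻¹ := by linarith
    calc ε0 * (-Real.log ε0) ≤ ε0 * (ε0⁻¹ * (Real.exp 1)⁻¹) :=
          mul_le_mul_of_nonneg_left h2 hε.le
      _ = (Real.exp 1)⁻¹ := by field_simp
  have hlt : -(ε0 / p0) * Real.log ε0 < ε0 * (-Real.log ε0) := by
    have : -(ε0 / p0) * Real.log ε0 = (ε0 * -Real.log ε0) / p0 := by ring
    rw [this]
    exact div_lt_self (by positivity) hp0
  have he : (Real.exp 1)⁻¹ < Real.log 2 := by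
    have h1 := Real.exp_one_gt_d9
    have h2 := Real.log_two_gt_d9
    have h3 : (Real.exp 1)⁻¹ ≤ (2.7182818283:ℝ)⁻¹ := by gcongr
    have h4 : ((2.7182818283:ℝ))⁻¹ < 0.6931471803 := by norm_num
    linarith
  linarith

private lemma serrin_int_p0 (ε0 p0 : ℝ) (hε : 0 < ε0) (hε1 : ε0 < 1) (hp0 : 1 < p0) :
    (∫ t in Ioc (-1:ℝ) 0, serrinSigma ε0 p0 t ^ p0) < 2 := by
  have hcongr : ∀ t ∈ Ioc (-1:ℝ) 0, serrinSigma ε0 p0 t ^ p0 = (ε0 - t) ^ (-ε0 + 1 - 1) := by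
    intro t ht
    have h0 : (0:ℝ) ≤ ε0 - t := by have := ht.2; linarith
    rw [serrinSigma, ← Real.rpow_mul h0]
    congr 1
    field_simp
    ring
  rw [setIntegral_congr_fun measurableSet_Ioc hcongr,
    serrin_integral_rpow_sub ε0 _ hε (by intro h0; linarith : -ε0 + 1 - 1 + 1 ≠ 0)]
  have hq : -ε0 + 1 - 1 + 1 = 1 - ε0 := by ring
  rw [hq]
  have hden : (0:ℝ) < 1 - ε0 := by linarith
  have hB : (1 + ε0) ^ (1 - ε0) ≤ 1 + (1 - ε0) * ε0 :=
    rpow_one_add_le_one_add_mul_self (by linarith) hden.le (by linarith)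
  have hE : ε0 ≤ ε0 ^ (1 - ε0) := by
    have := Real.rpow_le_rpow_of_exponent_ge hε hε1.le (by linarith : 1 - ε0 ≤ 1)
    simpa using this
  have hnum : (1 + ε0) ^ (1 - ε0) - ε0 ^ (1 - ε0) ≤ 1 - ε0 ^ 2 := by nlinarith
  calc ((1 + ε0) ^ (1 - ε0) - ε0 ^ (1 - ε0)) / (1 - ε0) ≤ (1 - ε0 ^ 2) / (1 - ε0) := by
        gcongr
    _ = 1 + ε0 := by field_simp; ring
    _ < 2 := by linarith

private lemma serrin_int_deriv (ε0 p0 : ℝ) (hε : 0 < ε0) (hε1 : ε0 < 1) (hp0 : 1 < p0) :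
    (∫ t in Ioc (-1:ℝ) 0, deriv (serrinSigma ε0 p0) t) < 2 := by
  have hcongr : ∀ t ∈ Ioc (-1:ℝ) 0,
      deriv (serrinSigma ε0 p0) t = (ε0 / p0) * (ε0 - t) ^ (-(ε0 / p0) - 1) := by
    intro t ht
    exact (serrin_sigma_hasDerivAt ε0 p0 t (by have := ht.2; linarith)).deriv
  have hne : ε0 / p0 ≠ 0 := by positivity
  rw [setIntegral_congr_fun measurableSet_Ioc hcongr, integral_const_mul,
    serrin_integral_rpow_sub ε0 _ hε (by intro h0; apply hne; linarith : -(ε0 / p0) - 1 + 1 ≠ 0)]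
  have hq : -(ε0 / p0) - 1 + 1 = -(ε0 / p0) := by ring
  rw [hq]
  have hval : (ε0 / p0) * (((1 + ε0) ^ (-(ε0 / p0)) - ε0 ^ (-(ε0 / p0))) / (-(ε0 / p0)))
      = ε0 ^ (-(ε0 / p0)) - (1 + ε0) ^ (-(ε0 / p0)) := by
    field_simp
    ring
  rw [hval]
  have h1 := serrin_rpow_self_lt_two ε0 p0 hε hε1 hp0
  have h2 : (0:ℝ) < (1 + ε0) ^ (-(ε0 / p0)) := Real.rpow_pos_of_pos (by linarith) _
  linarith

private lemma serrin_int_blowup (p0 M : ℝ) (hp0 : 1 < p0) :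
    ∃ ε0 ∈ Ioo (0:ℝ) 1,
      M < ∫ t in Ioc (-1:ℝ) 0, serrinSigma ε0 p0 t ^ (2 * p0 / ε0) := by
  set ε0 : ℝ := (max M 0 + 2)⁻¹ with hε0def
  have hden : (2:ℝ) ≤ max M 0 + 2 := by have := le_max_right M 0; linarith
  have hε : 0 < ε0 := by positivity
  have hε1 : ε0 < 1 := by
    have : ε0 ≤ (2:ℝ)⁻¹ := by rw [hε0def]; gcongr
    linarith
  refine ⟨ε0, ⟨hε, hε1⟩, ?_⟩
  have hcongr : ∀ t ∈ Ioc (-1:ℝ) 0,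
      serrinSigma ε0 p0 t ^ (2 * p0 / ε0) = (ε0 - t) ^ (-2 + 1 - 1 : ℝ) := by
    intro t ht
    have h0 : (0:ℝ) ≤ ε0 - t := by have := ht.2; linarith
    rw [serrinSigma, ← Real.rpow_mul h0]
    congr 1
    have hp0' : p0 ≠ 0 := by linarith
    field_simp
    ring
  rw [setIntegral_congr_fun measurableSet_Ioc hcongr,
    serrin_integral_rpow_sub ε0 _ hε (by norm_num : (-2 + 1 - 1 : ℝ) + 1 ≠ 0)]
  have hq : (-2 + 1 - 1 : ℝ) + 1 = -1 := by norm_num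
  rw [hq, Real.rpow_neg_one, Real.rpow_neg_one]
  have h1 : ε0⁻¹ = max M 0 + 2 := by rw [hε0def, inv_inv]
  have h2 : (1 + ε0)⁻¹ ≤ 1 := by
    rw [inv_le_one_iff₀]; right; linarith
  have h3 : M ≤ max M 0 := le_max_left M 0
  rw [div_neg, div_one]
  linarith [h1]

private lemma serrin_contDiffAt_fderiv_apply {E : Type*} [NormedAddCommGroup E]
    [NormedSpace ℝ E] {h : E → ℝ} {x : E} {m k : ℕ} (hh : ContDiffAt ℝ k h x)
    (hmk : m + 1 ≤ k) (v : E) : ContDiffAt ℝ m (fun y => fderiv ℝ h y v) x := by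
  have h1 : ContDiffAt ℝ m (fderiv ℝ h) x :=
    hh.fderiv_right (by exact_mod_cast hmk)
  exact ((ContinuousLinearMap.apply ℝ ℝ v).contDiff.contDiffAt).comp x h1

private lemma serrin_fderiv_fderiv_apply {E : Type*} [NormedAddCommGroup E] [NormedSpace ℝ E]
    {f : E → ℝ} {x : E} (hf : DifferentiableAt ℝ (fderiv ℝ f) x)
    (v w : E) : fderiv ℝ (fun y => fderiv ℝ f y v) x w = fderiv ℝ (fderiv ℝ f) x w v := by
  have h1 := fderiv_clm_apply hf (differentiableAt_const v)
  simp only [fderiv_fun_const, Pi.zero_apply, ContinuousLinearMap.comp_zero, zero_add] at h1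
  rw [h1]
  rfl

private lemma serrin_swap_second {E : Type*} [NormedAddCommGroup E] [NormedSpace ℝ E]
    {f : E → ℝ} {x : E} (hf : ContDiffAt ℝ 2 f x) (v w : E) :
    fderiv ℝ (fun y => fderiv ℝ f y v) x w = fderiv ℝ (fun y => fderiv ℝ f y w) x v := by
  have hd : DifferentiableAt ℝ (fderiv ℝ f) x :=
    (hf.fderiv_right (m := 1) (by norm_num)).differentiableAt (by norm_num)
  rw [serrin_fderiv_fderiv_apply hd, serrin_fderiv_fderiv_apply hd]
  exact (hf.isSymmSndFDerivAt (by norm_num)) w v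

private lemma serrin_laplacian_comm {n : ℕ} {Ω : Set (Pt n)} (hΩo : IsOpen Ω)
    {h : Pt n → ℝ} (hsm : ∀ y ∈ Ω, ContDiffAt ℝ 4 h y)
    (hharm : ∀ y ∈ Ω, (∑ i, fderiv ℝ (fun y' => fderiv ℝ h y' (EuclideanSpace.single i 1)) y
      (EuclideanSpace.single i 1)) = 0)
    {x : Pt n} (hx : x ∈ Ω) (k : Fin n) :
    ∑ i, fderiv ℝ (fun y => fderiv ℝ (fun y' => fderiv ℝ h y' (EuclideanSpace.single k 1)) y
      (EuclideanSpace.single i 1)) x (EuclideanSpace.single i 1) = 0 := by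
  set e : Fin n → Pt n := fun i => EuclideanSpace.single i 1 with he
  have hg : ∀ v : Pt n, ∀ y ∈ Ω, ContDiffAt ℝ 3 (fun y' => fderiv ℝ h y' v) y :=
    fun v y hy => serrin_contDiffAt_fderiv_apply (hsm y hy) (by norm_num) v
  have step1 : ∀ i : Fin n,
      fderiv ℝ (fun y => fderiv ℝ (fun y' => fderiv ℝ h y' (e k)) y (e i)) x (e i)
      = fderiv ℝ (fun y => fderiv ℝ (fun y' => fderiv ℝ h y' (e i)) y (e i)) x (e k) := by
    intro i
    have hev : (fun y => fderiv ℝ (fun y' => fderiv ℝ h y' (e k)) y (e i))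
        =ᶠ[nhds x] (fun y => fderiv ℝ (fun y' => fderiv ℝ h y' (e i)) y (e k)) := by
      filter_upwards [hΩo.mem_nhds hx] with y hy
      exact serrin_swap_second ((hsm y hy).of_le (by norm_num)) (e k) (e i)
    rw [hev.fderiv_eq]
    exact serrin_swap_second ((hg (e i) x hx).of_le (by norm_num)) (e k) (e i)
  calc ∑ i, fderiv ℝ (fun y => fderiv ℝ (fun y' => fderiv ℝ h y' (e k)) y (e i)) x (e i)
      = ∑ i, fderiv ℝ (fun y => fderiv ℝ (fun y' => fderiv ℝ h y' (e i)) y (e i)) x (e k) :=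
        Finset.sum_congr rfl (fun i _ => step1 i)
    _ = fderiv ℝ (fun y => ∑ i, fderiv ℝ (fun y' => fderiv ℝ h y' (e i)) y (e i)) x (e k) := by
        rw [fderiv_fun_sum (fun i _ =>
          (serrin_contDiffAt_fderiv_apply (m := 1) (hg (e i) x hx) (by norm_num)
            (e i)).differentiableAt (by norm_num))]
        simp
    _ = 0 := by
        have hev0 : (fun y => ∑ i, fderiv ℝ (fun y' => fderiv ℝ h y' (e i)) y (e i))
            =ᶠ[nhds x] (fun _ => (0:ℝ)) := by
          filter_upwards [hΩo.mem_nhds hx] with y hy using hharm y hy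
        rw [hev0.fderiv_eq]
        simp

end SerrinAux

/-- **Serrin's counterexample** (Remark 1.3 (iii)):  for harmonic `h`, the pair
`u = ∇h·σ`, `π = −h·σ'` solves the Stokes system with vanishing data, `∫σ^{p₀} < 2`,
`∫σ' < 2`, while `∫σ^{2p₀/ε₀}` admits no bound uniform in `ε₀`. -/
theorem serrin_counterexample
    (n : ℕ) (hn : 2 ≤ n) (Ω : Set (Pt n)) (hΩo : IsOpen Ω) (hΩc : IsConnected Ω)
    (p0 : ℝ) (hp0 : 1 < p0)
    (h : Pt n → ℝ) (hsm : ∀ x ∈ Ω, ContDiffAt ℝ (⊤ : ℕ∞) h x)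
    (hharm : ∀ x ∈ Ω,
      (∑ i, fderiv ℝ (fun y => fderiv ℝ h y (EuclideanSpace.single i 1)) x
        (EuclideanSpace.single i 1)) = 0) :
    (∀ ε0 ∈ Ioo (0:ℝ) 1,
      (∀ z ∈ Ω ×ˢ Ioc (-1:ℝ) 0, ∀ k : Fin n,
        Dt n (fun w => fderiv ℝ h w.1 (EuclideanSpace.single k 1) * serrinSigma ε0 p0 w.2) z
          - (∑ i, Dsp2 n
              (fun w => fderiv ℝ h w.1 (EuclideanSpace.single k 1) * serrinSigma ε0 p0 w.2)
              z i i)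
          + Dsp n (fun w => -(h w.1) * deriv (serrinSigma ε0 p0) w.2) z k = 0) ∧
      (∀ z ∈ Ω ×ˢ Ioc (-1:ℝ) 0,
        divg n (fun w k => fderiv ℝ h w.1 (EuclideanSpace.single k 1) * serrinSigma ε0 p0 w.2)
          z = 0) ∧
      (∫ t in Ioc (-1:ℝ) 0, serrinSigma ε0 p0 t ^ p0) < 2 ∧
      (∫ t in Ioc (-1:ℝ) 0, deriv (serrinSigma ε0 p0) t) < 2) ∧
    (∀ M : ℝ, ∃ ε0 ∈ Ioo (0:ℝ) 1,
      M < ∫ t in Ioc (-1:ℝ) 0, serrinSigma ε0 p0 t ^ (2 * p0 / ε0)) := by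
  have hsm4 : ∀ y ∈ Ω, ContDiffAt ℝ 4 h y := fun y hy => (hsm y hy).of_le (by exact WithTop.coe_le_coe.mpr (le_top : (4:ℕ∞) ≤ ⊤))
  constructor
  · rintro ε0 ⟨hε, hε1⟩
    refine ⟨?_, ?_, serrin_int_p0 ε0 p0 hε hε1 hp0, serrin_int_deriv ε0 p0 hε hε1 hp0⟩
    · rintro ⟨x, t⟩ ⟨hx, ht⟩ k
      have htε : t < ε0 := lt_of_le_of_lt ht.2 hε
      have hσd := serrin_sigma_hasDerivAt ε0 p0 t htε
      -- Term A: the time derivative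
      have hA : Dt n (fun w => fderiv ℝ h w.1 (EuclideanSpace.single k 1) * serrinSigma ε0 p0 w.2)
          (x, t) = fderiv ℝ h x (EuclideanSpace.single k 1)
            * ((ε0 / p0) * (ε0 - t) ^ (-(ε0 / p0) - 1)) :=
        (hσd.const_mul (fderiv ℝ h x (EuclideanSpace.single k 1))).deriv
      -- Term B: the Laplacian
      have hB : ∀ i : Fin n,
          Dsp2 n (fun w => fderiv ℝ h w.1 (EuclideanSpace.single k 1) * serrinSigma ε0 p0 w.2)
            (x, t) i i
          = serrinSigma ε0 p0 t *
            fderiv ℝ (fun y => fderiv ℝ (fun y' => fderiv ℝ h y' (EuclideanSpace.single k 1)) y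
              (EuclideanSpace.single i 1)) x (EuclideanSpace.single i 1) := by
        intro i
        have hev : (fun y => Dsp n
              (fun w => fderiv ℝ h w.1 (EuclideanSpace.single k 1) * serrinSigma ε0 p0 w.2)
              (y, t) i)
            =ᶠ[nhds x] (fun y => serrinSigma ε0 p0 t *
              fderiv ℝ (fun y' => fderiv ℝ h y' (EuclideanSpace.single k 1)) y
                (EuclideanSpace.single i 1)) := by
          filter_upwards [hΩo.mem_nhds hx] with y hy
          have hdy : DifferentiableAt ℝ
              (fun y' => fderiv ℝ h y' (EuclideanSpace.single k 1)) y :=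
            (serrin_contDiffAt_fderiv_apply (m := 3) (hsm4 y hy) (by norm_num)
              (EuclideanSpace.single k 1)).differentiableAt (by norm_num)
          show fderiv ℝ (fun y' => fderiv ℝ h y' (EuclideanSpace.single k 1)
            * serrinSigma ε0 p0 t) y (EuclideanSpace.single i 1) = _
          rw [fderiv_mul_const hdy]
          simp
        have hdx : DifferentiableAt ℝ
            (fun y => fderiv ℝ (fun y' => fderiv ℝ h y' (EuclideanSpace.single k 1)) y
              (EuclideanSpace.single i 1)) x :=
          (serrin_contDiffAt_fderiv_apply (m := 1)
            (serrin_contDiffAt_fderiv_apply (m := 3) (hsm4 x hx) (by norm_num)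
              (EuclideanSpace.single k 1)) (by norm_num)
            (EuclideanSpace.single i 1)).differentiableAt (by norm_num)
        show fderiv ℝ (fun y => Dsp n
            (fun w => fderiv ℝ h w.1 (EuclideanSpace.single k 1) * serrinSigma ε0 p0 w.2)
            (y, t) i) x (EuclideanSpace.single i 1) = _
        rw [hev.fderiv_eq, fderiv_const_mul hdx]
        simp
      have hBsum : (∑ i, Dsp2 n
            (fun w => fderiv ℝ h w.1 (EuclideanSpace.single k 1) * serrinSigma ε0 p0 w.2)
            (x, t) i i) = 0 := by
        rw [Finset.sum_congr rfl (fun i _ => hB i), ← Finset.mul_sum,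
          serrin_laplacian_comm hΩo hsm4 hharm hx k, mul_zero]
      -- Term C: the pressure gradient
      have hC : Dsp n (fun w => -(h w.1) * deriv (serrinSigma ε0 p0) w.2) (x, t) k
          = deriv (serrinSigma ε0 p0) t * (-(fderiv ℝ h x (EuclideanSpace.single k 1))) := by
        have hdh : DifferentiableAt ℝ (fun y => -(h y)) x :=
          ((hsm4 x hx).differentiableAt (by norm_num)).neg
        show fderiv ℝ (fun y => -(h y) * deriv (serrinSigma ε0 p0) t) x
          (EuclideanSpace.single k 1) = _
        rw [fderiv_mul_const hdh, fderiv_fun_neg]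
        simp
      rw [hA, hBsum, hC, hσd.deriv]
      ring
    · rintro ⟨x, t⟩ ⟨hx, ht⟩
      have hterm : ∀ i : Fin n,
          Dsp n (fun w => fderiv ℝ h w.1 (EuclideanSpace.single i 1) * serrinSigma ε0 p0 w.2)
            (x, t) i
          = serrinSigma ε0 p0 t * fderiv ℝ (fun y => fderiv ℝ h y (EuclideanSpace.single i 1))
            x (EuclideanSpace.single i 1) := by
        intro i
        have hdx : DifferentiableAt ℝ
            (fun y => fderiv ℝ h y (EuclideanSpace.single i 1)) x :=
          (serrin_contDiffAt_fderiv_apply (m := 3) (hsm4 x hx) (by norm_num)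
            (EuclideanSpace.single i 1)).differentiableAt (by norm_num)
        show fderiv ℝ (fun y => fderiv ℝ h y (EuclideanSpace.single i 1) * serrinSigma ε0 p0 t)
          x (EuclideanSpace.single i 1) = _
        rw [fderiv_mul_const hdx]
        simp
      show (∑ i, Dsp n
          (fun w => fderiv ℝ h w.1 (EuclideanSpace.single i 1) * serrinSigma ε0 p0 w.2)
          (x, t) i) = 0
      rw [Finset.sum_congr rfl (fun i _ => hterm i), ← Finset.mul_sum, hharm x hx, mul_zero]
  · intro M
    exact serrin_int_blowup p0 M hp0


end
end

section
/- Let 0<ε<1 and let E ⊂ F ⊂ Q_1 be two measurable subsets of ℝ^{n+1} such that |E| < ε|Q_1|, and such that for any (x,t) ∈ Q_1 and r ∈ (0,1], the inequality |E ∩ K_r(x,t)| ≥ ε|K_r(x,t)| implies K_r(x,t) ∩ Q_1 ⊂ F. Then |E| ≤ 10^{n+2} ε |F|. -/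
open MeasureTheory Metric Set

noncomputable section

namespace MVC
open scoped ENNReal NNReal
variable {n : ℕ}


/-- type synonym carrying the parabolic metric -/
def PP (n : ℕ) := Pt n × ℝ

variable {n : ℕ}

instance : TopologicalSpace (PP n) := inferInstanceAs (TopologicalSpace (Pt n × ℝ))
instance : MeasurableSpace (PP n) := inferInstanceAs (MeasurableSpace (Pt n × ℝ))
instance : MeasureSpace (PP n) := inferInstanceAs (MeasureSpace (Pt n × ℝ))
instance : SecondCountableTopology (PP n) := inferInstanceAs (SecondCountableTopology (Pt n × ℝ))
instance : BorelSpace (PP n) := inferInstanceAs (BorelSpace (Pt n × ℝ))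

def pdist (z w : PP n) : ℝ :=
  max (dist (show Pt n × ℝ from z).1 (show Pt n × ℝ from w).1)
    (Real.sqrt (dist (show Pt n × ℝ from z).2 (show Pt n × ℝ from w).2))

lemma pdist_nonneg (z w : PP n) : 0 ≤ pdist z w :=
  le_trans dist_nonneg (le_max_left _ _)

lemma sqrt_dist_triangle (a b c : ℝ) :
    Real.sqrt (dist a c) ≤ Real.sqrt (dist a b) + Real.sqrt (dist b c) := by
  have h1 : dist a c ≤ dist a b + dist b c := dist_triangle a b c
  have h2 : dist a b + dist b c ≤ (Real.sqrt (dist a b) + Real.sqrt (dist b c)) ^ 2 := by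
    have := Real.sq_sqrt (dist_nonneg : (0:ℝ) ≤ dist a b)
    have := Real.sq_sqrt (dist_nonneg : (0:ℝ) ≤ dist b c)
    have := Real.sqrt_nonneg (dist a b)
    have := Real.sqrt_nonneg (dist b c)
    nlinarith
  calc Real.sqrt (dist a c) ≤ Real.sqrt ((Real.sqrt (dist a b) + Real.sqrt (dist b c)) ^ 2) :=
        Real.sqrt_le_sqrt (h1.trans h2)
    _ = Real.sqrt (dist a b) + Real.sqrt (dist b c) :=
        Real.sqrt_sq (by positivity)

lemma pdist_triangle (x y z : PP n) : pdist x z ≤ pdist x y + pdist y z := by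
  refine max_le ?_ ?_
  · exact le_trans (dist_triangle _ _ _)
      (add_le_add (le_max_left _ _) (le_max_left _ _))
  · exact le_trans (sqrt_dist_triangle _ _ _)
      (add_le_add (le_max_right _ _) (le_max_right _ _))

lemma pdist_lt_iff {z w : PP n} {ε : ℝ} (hε : 0 < ε) :
    pdist z w < ε ↔ dist (show Pt n × ℝ from z).1 (show Pt n × ℝ from w).1 < ε ∧
      dist (show Pt n × ℝ from z).2 (show Pt n × ℝ from w).2 < ε ^ 2 := by
  rw [pdist, max_lt_iff]
  constructor
  · rintro ⟨h1, h2⟩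
    refine ⟨h1, ?_⟩
    have := Real.sq_sqrt (dist_nonneg : (0:ℝ) ≤ dist (show Pt n × ℝ from z).2 (show Pt n × ℝ from w).2)
    nlinarith [Real.sqrt_nonneg (dist (show Pt n × ℝ from z).2 (show Pt n × ℝ from w).2)]
  · rintro ⟨h1, h2⟩
    refine ⟨h1, ?_⟩
    have : Real.sqrt (dist (show Pt n × ℝ from z).2 (show Pt n × ℝ from w).2) < Real.sqrt (ε^2) :=
      Real.sqrt_lt_sqrt dist_nonneg h2
    rwa [Real.sqrt_sq hε.le] at this

instance : MetricSpace (PP n) := by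
  refine MetricSpace.ofDistTopology pdist (fun x => by simp [pdist]) 
    (fun x y => by simp [pdist, dist_comm]) pdist_triangle (fun s => ?_) (fun x y h => ?_)
  · have hcast : ∀ u : Set (PP n), IsOpen u ↔ IsOpen (show Set (Pt n × ℝ) from u) :=
      fun u => Iff.rfl
    constructor
    · intro hs x hx
      -- product topology: use product metric
      rw [hcast, Metric.isOpen_iff] at hs
      obtain ⟨ε, hε, hball⟩ := hs x hx
      refine ⟨min ε (Real.sqrt ε), by positivity, fun y hy => ?_⟩
      apply hball
      show (show Pt n × ℝ from y) ∈ ball (show Pt n × ℝ from x) ε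
      rw [mem_ball, dist_comm, Prod.dist_eq, max_lt_iff]
      rw [pdist_lt_iff (by positivity)] at hy
      constructor
      · exact hy.1.trans_le (min_le_left _ _)
      · calc dist (show Pt n × ℝ from x).2 (show Pt n × ℝ from y).2 < (min ε (Real.sqrt ε))^2 := hy.2
          _ ≤ (Real.sqrt ε)^2 := by
              have : (0:ℝ) ≤ min ε (Real.sqrt ε) := by positivity
              nlinarith [min_le_right ε (Real.sqrt ε)]
          _ = ε := Real.sq_sqrt hε.le
    · intro h
      rw [hcast, Metric.isOpen_iff]
      intro x hx
      obtain ⟨ε, hε, h'⟩ := h x hx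
      refine ⟨min ε (ε^2), by positivity, fun y hy => ?_⟩
      apply h'
      rw [mem_ball, dist_comm, Prod.dist_eq, max_lt_iff] at hy
      show pdist (show PP n from x) (show PP n from y) < ε
      rw [pdist_lt_iff hε]
      exact ⟨hy.1.trans_le (min_le_left _ _), hy.2.trans_le (min_le_right _ _)⟩
  · have h' : pdist x y = 0 := h
    have h1 : dist (show Pt n × ℝ from x).1 (show Pt n × ℝ from y).1 = 0 :=
      le_antisymm (le_trans (le_max_left _ _) h'.le) dist_nonneg
    have h2 : Real.sqrt (dist (show Pt n × ℝ from x).2 (show Pt n × ℝ from y).2) = 0 :=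
      le_antisymm (le_trans (le_max_right _ _) h'.le) (Real.sqrt_nonneg _)
    have h2' : dist (show Pt n × ℝ from x).2 (show Pt n × ℝ from y).2 = 0 := by
      have hd := Real.sq_sqrt (dist_nonneg : (0:ℝ) ≤ dist (show Pt n × ℝ from x).2 (show Pt n × ℝ from y).2)
      rw [← hd, h2]; ring
    show (x : Pt n × ℝ) = (y : Pt n × ℝ)
    exact Prod.ext (by rwa [dist_eq_zero] at h1) (by rwa [dist_eq_zero] at h2')

instance : OpensMeasurableSpace (PP n) := inferInstanceAs (OpensMeasurableSpace (Pt n × ℝ))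
instance : IsLocallyFiniteMeasure (volume : Measure (PP n)) :=
  inferInstanceAs (IsLocallyFiniteMeasure (volume : Measure (Pt n × ℝ)))
instance : (volume : Measure (PP n)).OuterRegular :=
  inferInstanceAs ((volume : Measure (Pt n × ℝ)).OuterRegular)

lemma dist_eq_pdist (z w : PP n) : dist z w = pdist z w := rfl

lemma pp_closedBall_eq (z : PP n) {r : ℝ} (hr : 0 ≤ r) :
    closedBall z r = ((closedBall (show Pt n × ℝ from z).1 r) ×ˢ
      (Icc ((show Pt n × ℝ from z).2 - r^2) ((show Pt n × ℝ from z).2 + r^2)) : Set (Pt n × ℝ)) := by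
  ext w
  show pdist w z ≤ r ↔ _
  rw [pdist, max_le_iff]
  constructor
  · rintro ⟨h1, h2⟩
    have h2' : dist (show Pt n × ℝ from w).2 (show Pt n × ℝ from z).2 ≤ r ^ 2 := by
      have := Real.sq_sqrt (dist_nonneg : (0:ℝ) ≤ dist (show Pt n × ℝ from w).2 (show Pt n × ℝ from z).2)
      nlinarith [Real.sqrt_nonneg (dist (show Pt n × ℝ from w).2 (show Pt n × ℝ from z).2)]
    rw [Real.dist_eq, abs_le] at h2'
    exact ⟨h1, by constructor <;> linarith [h2'.1, h2'.2]⟩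
  · rintro ⟨h1, h2⟩
    rw [mem_Icc] at h2
    refine ⟨h1, ?_⟩
    have : dist (show Pt n × ℝ from w).2 (show Pt n × ℝ from z).2 ≤ r^2 := by
      rw [Real.dist_eq, abs_le]; constructor <;> linarith [h2.1, h2.2]
    calc Real.sqrt (dist (show Pt n × ℝ from w).2 (show Pt n × ℝ from z).2)
        ≤ Real.sqrt (r^2) := Real.sqrt_le_sqrt this
      _ = r := Real.sqrt_sq hr




lemma pK_def (r : ℝ) (z : Pt n × ℝ) :
    pK n r z = (ball z.1 r) ×ˢ Ioc (z.2 - r ^ 2 / 2) (z.2 + r ^ 2 / 2) := rfl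
lemma pQ_def (r : ℝ) (z : Pt n × ℝ) :
    pQ n r z = (ball z.1 r) ×ˢ Ioc (z.2 - r ^ 2) z.2 := rfl

def Bv (n : ℕ) : ℝ≥0∞ := volume (ball (0 : Pt n) 1)

lemma vol_prod (A : Set (Pt n)) (I : Set ℝ) : volume (A ×ˢ I) = volume A * volume I := by
  rw [MeasureTheory.Measure.volume_eq_prod, Measure.prod_prod]

lemma vol_ball (x : Pt n) {r : ℝ} (hr : 0 < r) :
    volume (ball x r) = ENNReal.ofReal (r ^ n) * Bv n := by
  rw [Measure.addHaar_ball_of_pos volume x hr, finrank_euclideanSpace_fin, Bv]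

lemma vol_pK {r : ℝ} (hr : 0 < r) (z : Pt n × ℝ) :
    volume (pK n r z) = ENNReal.ofReal (r ^ (n + 2)) * Bv n := by
  rw [pK_def, vol_prod, vol_ball _ hr, Real.volume_Ioc]
  have h1 : z.2 + r ^ 2 / 2 - (z.2 - r ^ 2 / 2) = r ^ 2 := by ring
  rw [h1, mul_comm (ENNReal.ofReal (r ^ n)) (Bv n), mul_assoc, ← ENNReal.ofReal_mul (by positivity),
    ← pow_add, mul_comm (Bv n)]

lemma vol_pQ1 : volume (pQ n 1 0) = Bv n := by
  rw [pQ_def, vol_prod, vol_ball _ one_pos, Real.volume_Ioc]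
  norm_num [Bv]

lemma measurableSet_pK {r : ℝ} (z : Pt n × ℝ) : MeasurableSet (pK n r z) :=
  (measurableSet_ball).prod measurableSet_Ioc

lemma mem_pK_self {r : ℝ} (hr : 0 < r) (z : Pt n × ℝ) : z ∈ pK n r z := by
  refine ⟨mem_ball_self hr, ?_, ?_⟩ <;> nlinarith

lemma pK_mono (z : Pt n × ℝ) {r r' : ℝ} (h0 : 0 ≤ r) (h : r ≤ r') : pK n r z ⊆ pK n r' z := by
  rintro w ⟨h1, h2, h3⟩
  have hrr : r ^ 2 ≤ r' ^ 2 := by nlinarith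
  exact ⟨ball_subset_ball h h1, by linarith, by linarith⟩

lemma pK_subset_of_inter {r₁ r₂ : ℝ} {z₁ z₂ : Pt n × ℝ} (hr2 : 0 < r₂) (h12 : r₁ ≤ 2 * r₂)
    (hne : (pK n r₁ z₁ ∩ pK n r₂ z₂).Nonempty) : pK n r₁ z₁ ⊆ pK n (5 * r₂) z₂ := by
  obtain ⟨w, ⟨hw1, hw2, hw3⟩, ⟨hw1', hw2', hw3'⟩⟩ := hne
  rw [mem_ball] at hw1 hw1'
  rintro v ⟨hv1, hv2, hv3⟩
  rw [mem_ball] at hv1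
  have hr1 : 0 < r₁ := lt_of_le_of_lt dist_nonneg hw1
  have hd : dist z₁.1 z₂.1 < r₁ + r₂ := by
    calc dist z₁.1 z₂.1 ≤ dist z₁.1 w.1 + dist w.1 z₂.1 := dist_triangle _ _ _
      _ < r₁ + r₂ := by rw [dist_comm z₁.1 w.1]; exact add_lt_add hw1 hw1'
  have hdt : |z₁.2 - z₂.2| ≤ r₁ ^ 2 / 2 + r₂ ^ 2 / 2 := by
    rw [abs_le]; constructor <;> nlinarith
  rw [abs_le] at hdt
  refine ⟨?_, ?_, ?_⟩
  · show v.1 ∈ ball z₂.1 (5 * r₂)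
    rw [mem_ball]
    calc dist v.1 z₂.1 ≤ dist v.1 z₁.1 + dist z₁.1 z₂.1 := dist_triangle _ _ _
      _ < r₁ + (r₁ + r₂) := add_lt_add hv1 hd
      _ ≤ 5 * r₂ := by linarith
  · show z₂.2 - (5 * r₂) ^ 2 / 2 < v.2
    nlinarith [hdt.1, hdt.2]
  · show v.2 ≤ z₂.2 + (5 * r₂) ^ 2 / 2
    nlinarith [hdt.1, hdt.2]

lemma ball_inter_ball {x : Pt n} (hx : ‖x‖ < 1) {r : ℝ} (hr0 : 0 < r) (hr1 : r ≤ 1) :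
    ∃ y : Pt n, ball y (r / 2) ⊆ ball x r ∩ ball 0 1 := by
  rcases le_or_gt ‖x‖ (r / 2) with h | h
  · refine ⟨0, fun w hw => ?_⟩
    rw [mem_ball, dist_zero_right] at hw
    constructor
    · rw [mem_ball, dist_eq_norm]
      calc ‖w - x‖ ≤ ‖w‖ + ‖x‖ := norm_sub_le _ _
        _ < r / 2 + r / 2 := add_lt_add_of_lt_of_le hw h
        _ = r := by ring
    · rw [mem_ball, dist_zero_right]
      calc ‖w‖ < r / 2 := hw
        _ < 1 := by linarith
  · have hxpos : (0:ℝ) < ‖x‖ := lt_trans (by positivity) h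
    have hxne : ‖x‖ ≠ 0 := ne_of_gt hxpos
    set c : ℝ := 1 - r / (2 * ‖x‖) with hc
    have hcpos : 0 < c := by
      rw [hc, sub_pos, div_lt_one (by positivity)]
      linarith
    have hyx : dist (c • x) x = r / 2 := by
      rw [dist_eq_norm]
      have h1 : c • x - x = (c - 1) • x := by module
      rw [h1, norm_smul, Real.norm_eq_abs]
      have h2 : c - 1 = -(r / (2 * ‖x‖)) := by rw [hc]; ring
      rw [h2, abs_neg, abs_of_pos (by positivity)]
      field_simp
    have hyn : ‖c • x‖ = ‖x‖ - r / 2 := by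
      rw [norm_smul, Real.norm_eq_abs, abs_of_pos hcpos, hc]
      field_simp
    refine ⟨c • x, fun w hw => ?_⟩
    rw [mem_ball] at hw
    constructor
    · rw [mem_ball]
      calc dist w x ≤ dist w (c • x) + dist (c • x) x := dist_triangle _ _ _
        _ < r / 2 + r / 2 := by rw [hyx]; exact add_lt_add_left hw _
        _ = r := by ring
    · rw [mem_ball, dist_zero_right]
      calc ‖w‖ ≤ dist w (c • x) + ‖c • x‖ := by
            rw [dist_eq_norm]
            calc ‖w‖ = ‖(w - c • x) + c • x‖ := by rw [sub_add_cancel]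
              _ ≤ _ := norm_add_le _ _
        _ < r / 2 + (‖x‖ - r / 2) := by rw [hyn]; exact add_lt_add_left hw _
        _ = ‖x‖ := by ring
        _ < 1 := hx

lemma time_inter {t r : ℝ} (ht1 : -1 < t) (ht0 : t ≤ 0) (hr0 : 0 < r) (hr1 : r ≤ 1) :
    r ^ 2 / 2 ≤ min (t + r ^ 2 / 2) 0 - max (t - r ^ 2 / 2) (-1) := by
  rcases le_or_gt (t + r ^ 2 / 2) 0 with h | h
  · rw [min_eq_left h]
    rcases le_or_gt (-1) (t - r ^ 2 / 2) with h' | h'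
    · rw [max_eq_left h']; nlinarith
    · rw [max_eq_right h'.le]; nlinarith
  · rw [min_eq_right h.le]
    have : -1 ≤ t - r ^ 2 / 2 := by nlinarith
    rw [max_eq_left this]; nlinarith

lemma vol_pK_inter_pQ {z : Pt n × ℝ} (hz : z ∈ pQ n 1 0) {r : ℝ} (hr0 : 0 < r) (hr1 : r ≤ 1) :
    volume (pK n r z) ≤ 2 ^ (n + 1) * volume (pK n r z ∩ pQ n 1 0) := by
  obtain ⟨hz1, hz2, hz3⟩ := hz
  simp only [Prod.fst_zero, Prod.snd_zero] at hz1 hz2 hz3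
  rw [mem_ball, dist_zero_right] at hz1
  norm_num at hz2
  obtain ⟨y, hy⟩ := ball_inter_ball hz1 hr0 hr1
  set a : ℝ := max (z.2 - r ^ 2 / 2) (-1) with ha
  set b : ℝ := min (z.2 + r ^ 2 / 2) 0 with hb
  have hsub : (ball y (r / 2)) ×ˢ Ioc a b ⊆ pK n r z ∩ pQ n 1 0 := by
    rw [pK_def, pQ_def, prod_inter_prod, Ioc_inter_Ioc]
    refine prod_mono hy ?_
    simp only [Prod.snd_zero, ha, hb]
    norm_num
  have htime : r ^ 2 / 2 ≤ b - a := time_inter hz2 hz3 hr0 hr1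
  have key : (2:ℝ) ^ (n + 1) * ((r / 2) ^ n * (r ^ 2 / 2)) = r ^ (n + 2) := by
    rw [div_pow, pow_add, pow_succ]
    field_simp
    ring
  have h2e : ((2:ℝ≥0∞) ^ (n + 1)) = ENNReal.ofReal ((2:ℝ) ^ (n + 1)) := by
    rw [ENNReal.ofReal_pow (by norm_num)]
    norm_num
  calc volume (pK n r z) = ENNReal.ofReal (r ^ (n + 2)) * Bv n := vol_pK hr0 z
    _ = ENNReal.ofReal ((2:ℝ) ^ (n + 1) * ((r / 2) ^ n * (r ^ 2 / 2))) * Bv n := by rw [key]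
    _ = 2 ^ (n + 1) * ((ENNReal.ofReal ((r / 2) ^ n) * Bv n) * ENNReal.ofReal (r ^ 2 / 2)) := by
        rw [ENNReal.ofReal_mul (by positivity), ENNReal.ofReal_mul (by positivity), h2e]
        ring
    _ ≤ 2 ^ (n + 1) * (volume (ball y (r / 2)) * volume (Ioc a b)) := by
        refine mul_le_mul_right ?_ _
        rw [vol_ball y (by positivity : (0:ℝ) < r / 2), Real.volume_Ioc]
        exact mul_le_mul' le_rfl (ENNReal.ofReal_le_ofReal htime)
    _ = 2 ^ (n + 1) * volume ((ball y (r / 2)) ×ˢ Ioc a b) := by rw [vol_prod]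
    _ ≤ 2 ^ (n + 1) * volume (pK n r z ∩ pQ n 1 0) := mul_le_mul_right (measure_mono hsub) _



lemma Bv_pos : 0 < Bv n := measure_ball_pos _ _ one_pos
lemma Bv_ne_top : Bv n ≠ ∞ := measure_ball_lt_top.ne

/-- closed version of pK -/
def pKbar (n : ℕ) (r : ℝ) (z : Pt n × ℝ) : Set (Pt n × ℝ) :=
  (closedBall z.1 r) ×ˢ Icc (z.2 - r ^ 2 / 2) (z.2 + r ^ 2 / 2)

lemma pK_subset_pKbar (r : ℝ) (z : Pt n × ℝ) : pK n r z ⊆ pKbar n r z :=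
  prod_mono ball_subset_closedBall Ioc_subset_Icc_self

lemma vol_pKbar {r : ℝ} (hr : 0 < r) (z : Pt n × ℝ) :
    volume (pKbar n r z) = ENNReal.ofReal (r ^ (n + 2)) * Bv n := by
  rw [pKbar, vol_prod, Measure.addHaar_closedBall volume z.1 hr.le, finrank_euclideanSpace_fin,
    Real.volume_Icc]
  have h1 : z.2 + r ^ 2 / 2 - (z.2 - r ^ 2 / 2) = r ^ 2 := by ring
  rw [h1, ← Bv, mul_comm (ENNReal.ofReal (r ^ n)) (Bv n), mul_assoc,
    ← ENNReal.ofReal_mul (by positivity), ← pow_add, mul_comm (Bv n)]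

lemma measurableSet_pKbar {r : ℝ} (z : Pt n × ℝ) : MeasurableSet (pKbar n r z) :=
  (measurableSet_closedBall).prod measurableSet_Icc

lemma vol_pKbar_diff {r : ℝ} (hr : 0 < r) (z : Pt n × ℝ) :
    volume (pKbar n r z \ pK n r z) = 0 := by
  rw [measure_diff (pK_subset_pKbar r z) (measurableSet_pK z).nullMeasurableSet
    (by rw [vol_pK hr]; exact ENNReal.mul_ne_top ENNReal.ofReal_ne_top Bv_ne_top),
    vol_pKbar hr, vol_pK hr, tsub_self]

lemma vol_inter_pKbar_le (E : Set (Pt n × ℝ)) {r : ℝ} (hr : 0 < r) (z : Pt n × ℝ) :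
    volume (E ∩ pKbar n r z) ≤ volume (E ∩ pK n r z) := by
  calc volume (E ∩ pKbar n r z) ≤ volume ((E ∩ pK n r z) ∪ (pKbar n r z \ pK n r z)) := by
        refine measure_mono fun w hw => ?_
        rcases Classical.em (w ∈ pK n r z) with h | h
        · exact Or.inl ⟨hw.1, h⟩
        · exact Or.inr ⟨hw.2, h⟩
    _ ≤ volume (E ∩ pK n r z) + volume (pKbar n r z \ pK n r z) := measure_union_le _ _
    _ = volume (E ∩ pK n r z) := by rw [vol_pKbar_diff hr, add_zero]

/-- the key covering-based fact: points of `E` where all scales `≤ 1` have `E`-density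
less than `ε` form a null set. -/
lemma bad_null {ε : ℝ} (hε0 : 0 < ε) (hε1 : ε < 1) {E : Set (Pt n × ℝ)}
    (hEfin : volume E ≠ ∞) :
    volume {z : Pt n × ℝ | z ∈ E ∧ ∀ r : ℝ, 0 < r → r ≤ 1 →
      volume (E ∩ pK n r z) < ENNReal.ofReal ε * volume (pK n r z)} = 0 := by
  set E' : Set (Pt n × ℝ) := {z : Pt n × ℝ | z ∈ E ∧ ∀ r : ℝ, 0 < r → r ≤ 1 →
      volume (E ∩ pK n r z) < ENNReal.ofReal ε * volume (pK n r z)} with hE'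
  have hE'fin : volume E' ≠ ∞ := fun h =>
    hEfin (top_le_iff.1 (h ▸ measure_mono (fun z hz => hz.1)))
  -- main estimate
  have main : ∀ δ : ℝ≥0, 0 < δ → volume E' ≤ ENNReal.ofReal ε * volume E' + δ := by
    intro δ hδ
    obtain ⟨U, hE'U, hUo, hUlt⟩ := Set.exists_isOpen_lt_add E' hE'fin
      (show (δ : ℝ≥0∞) ≠ 0 by exact_mod_cast hδ.ne')
    -- work in the parabolic metric space `PP n`
    let t : Set ((Pt n × ℝ) × ℝ) := {p | p.1 ∈ E' ∧ 0 < p.2 ∧ p.2 ≤ 1 ∧ pKbar n p.2 p.1 ⊆ U}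
    have hUo' : IsOpen (show Set (PP n) from U) := hUo
    have hB : ∀ p ∈ t, (show Set (PP n) from pKbar n p.2 p.1) ⊆
        closedBall (show PP n from p.1) p.2 := by
      intro p hp
      rw [pp_closedBall_eq _ hp.2.1.le]
      exact prod_mono subset_rfl
        (Icc_subset_Icc (by nlinarith [hp.2.1]) (by nlinarith [hp.2.1]))
    have hμB : ∀ p ∈ t, volume (closedBall (show PP n from p.1) (3 * p.2)) ≤
        ((2 * 3 ^ (n + 2) : ℝ≥0)) * volume (show Set (PP n) from pKbar n p.2 p.1) := by
      intro p hp
      have hr0 : (0:ℝ) < p.2 := hp.2.1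
      have h3r : (0:ℝ) ≤ 3 * p.2 := by linarith
      have hc : (((2 * 3 ^ (n + 2) : ℝ≥0)) : ℝ≥0∞) = ENNReal.ofReal ((2 * 3 ^ (n + 2) : ℝ)) := by
        rw [ENNReal.ofReal_mul (by norm_num), ENNReal.ofReal_pow (by norm_num)]
        norm_num
      have h1 : p.1.2 + (3 * p.2) ^ 2 - (p.1.2 - (3 * p.2) ^ 2) = 2 * 3 ^ 2 * p.2 ^ 2 := by ring
      calc volume (closedBall (show PP n from p.1) (3 * p.2))
          = ENNReal.ofReal ((3 * p.2) ^ n) * Bv n * ENNReal.ofReal (2 * 3 ^ 2 * p.2 ^ 2) := by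
            rw [pp_closedBall_eq _ h3r]
            show (volume : Measure (Pt n × ℝ)) ((closedBall p.1.1 (3 * p.2)) ×ˢ _) = _
            rw [vol_prod, Measure.addHaar_closedBall volume p.1.1 h3r,
              finrank_euclideanSpace_fin, Real.volume_Icc, h1, ← Bv]
        _ = ENNReal.ofReal ((2 * 3 ^ (n + 2) : ℝ)) * (ENNReal.ofReal (p.2 ^ (n + 2)) * Bv n) := by
            rw [mul_right_comm, ← ENNReal.ofReal_mul (pow_nonneg h3r n)]
            conv_rhs => rw [← mul_assoc, ← ENNReal.ofReal_mul (by norm_num : (0:ℝ) ≤ 2 * 3 ^ (n + 2))]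
            rw [mul_right_comm]
            congr 2
            rw [mul_pow, pow_add]
            ring
        _ = ((2 * 3 ^ (n + 2) : ℝ≥0)) * volume (show Set (PP n) from pKbar n p.2 p.1) := by
            rw [hc]
            congr 1
            exact (vol_pKbar hr0 p.1).symm
        _ ≤ ((2 * 3 ^ (n + 2) : ℝ≥0)) * volume (show Set (PP n) from pKbar n p.2 p.1) := le_rfl
    have hint : ∀ p ∈ t, (interior (show Set (PP n) from pKbar n p.2 p.1)).Nonempty := by
      intro p hp
      have hop : IsOpen (show Set (PP n) from (ball p.1.1 p.2) ×ˢ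
          Ioo (p.1.2 - p.2 ^ 2 / 2) (p.1.2 + p.2 ^ 2 / 2)) :=
        (isOpen_ball.prod isOpen_Ioo : IsOpen ((ball p.1.1 p.2) ×ˢ Ioo _ _))
      refine ⟨(show PP n from p.1), interior_maximal ?_ hop ?_⟩
      · exact prod_mono ball_subset_closedBall Ioo_subset_Icc_self
      · exact ⟨mem_ball_self hp.2.1, by constructor <;> [nlinarith [hp.2.1]; nlinarith [hp.2.1]]⟩
    have hcl : ∀ p ∈ t, IsClosed (show Set (PP n) from pKbar n p.2 p.1) := by
      intro p hp
      exact (IsClosed.prod Metric.isClosed_closedBall isClosed_Icc :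
        IsClosed ((closedBall p.1.1 p.2) ×ˢ Icc (p.1.2 - p.2 ^ 2 / 2) (p.1.2 + p.2 ^ 2 / 2)))
    have hf : ∀ x ∈ (show Set (PP n) from E'), ∀ η > (0:ℝ), ∃ p ∈ t, p.2 ≤ η ∧
        (show PP n from p.1) = x := by
      intro x hx η hη
      obtain ⟨ρ, hρ, hball⟩ := Metric.isOpen_iff.1 hUo' x (hE'U hx)
      have hrpos : (0:ℝ) < min (min η 1) (ρ / 2) := lt_min (lt_min hη one_pos) (half_pos hρ)
      refine ⟨((show Pt n × ℝ from x), min (min η 1) (ρ / 2)), ⟨hx, hrpos, ?_, ?_⟩, ?_, rfl⟩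
      · exact le_trans (min_le_left _ _) (min_le_right _ _)
      · have hlt : min (min η 1) (ρ / 2) < ρ := by
          have := min_le_right (min η 1) (ρ / 2); linarith
        have step1 : (show Set (PP n) from pKbar n (min (min η 1) (ρ / 2)) (show Pt n × ℝ from x))
            ⊆ closedBall x (min (min η 1) (ρ / 2)) := by
          rw [pp_closedBall_eq _ hrpos.le]
          exact prod_mono subset_rfl (Icc_subset_Icc (by nlinarith [sq_nonneg (min (min η 1) (ρ / 2))])
            (by nlinarith [sq_nonneg (min (min η 1) (ρ / 2))]))
        exact subset_trans step1 (subset_trans (closedBall_subset_ball hlt) hball)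
      · exact le_trans (min_le_left _ _) (min_le_left _ _)
    obtain ⟨u, hut, hucnt, hudisj, hucov⟩ :=
      Vitali.exists_disjoint_covering_ae (α := PP n) (ι := (Pt n × ℝ) × ℝ)
        (volume : Measure (PP n)) (show Set (PP n) from E') t
        ((2 * 3 ^ (n + 2) : ℝ≥0)) (fun p => p.2) (fun p => (show PP n from p.1))
        (fun p => (show Set (PP n) from pKbar n p.2 p.1)) hB hμB hint hcl hf
    have hucov' : volume (E' \ ⋃ a ∈ u, pKbar n a.2 a.1) = 0 := hucov
    have hudisj' : u.PairwiseDisjoint (fun a : (Pt n × ℝ) × ℝ => pKbar n a.2 a.1) := hudisj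
    have hterm : ∀ a : ((Pt n × ℝ) × ℝ), a ∈ u →
        volume (E' ∩ pKbar n a.2 a.1) ≤ ENNReal.ofReal ε * volume (pKbar n a.2 a.1) := by
      intro a ha
      obtain ⟨haE', har0, har1, haU⟩ := hut ha
      calc volume (E' ∩ pKbar n a.2 a.1) ≤ volume (E ∩ pKbar n a.2 a.1) :=
            measure_mono (inter_subset_inter_left _ (fun w hw => hw.1))
        _ ≤ volume (E ∩ pK n a.2 a.1) := vol_inter_pKbar_le E har0 a.1
        _ ≤ ENNReal.ofReal ε * volume (pK n a.2 a.1) := (haE'.2 a.2 har0 har1).le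
        _ = ENNReal.ofReal ε * volume (pKbar n a.2 a.1) := by
            rw [vol_pK har0, vol_pKbar har0]
    have hUsub : (⋃ a ∈ u, pKbar n a.2 a.1) ⊆ U := by
      refine iUnion₂_subset fun a ha => ?_
      exact (hut ha).2.2.2
    calc volume E' ≤ volume (E' ∩ ⋃ a ∈ u, pKbar n a.2 a.1) +
          volume (E' \ ⋃ a ∈ u, pKbar n a.2 a.1) := measure_le_inter_add_diff _ _ _
      _ = volume (⋃ a ∈ u, E' ∩ pKbar n a.2 a.1) := by rw [hucov', add_zero, inter_iUnion₂]
      _ ≤ ∑' a : u, volume (E' ∩ pKbar n (a : ((Pt n × ℝ) × ℝ)).2 (a : ((Pt n × ℝ) × ℝ)).1) :=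
          measure_biUnion_le volume hucnt _
      _ ≤ ∑' a : u, ENNReal.ofReal ε *
            volume (pKbar n (a : ((Pt n × ℝ) × ℝ)).2 (a : ((Pt n × ℝ) × ℝ)).1) :=
          ENNReal.tsum_le_tsum (fun a => hterm a a.2)
      _ = ENNReal.ofReal ε *
            ∑' a : u, volume (pKbar n (a : ((Pt n × ℝ) × ℝ)).2 (a : ((Pt n × ℝ) × ℝ)).1) :=
          ENNReal.tsum_mul_left
      _ = ENNReal.ofReal ε * volume (⋃ a ∈ u, pKbar n a.2 a.1) := by
          rw [measure_biUnion hucnt hudisj' (fun a _ => measurableSet_pKbar a.1)]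
      _ ≤ ENNReal.ofReal ε * volume U := mul_le_mul_right (measure_mono hUsub) _
      _ ≤ ENNReal.ofReal ε * (volume E' + δ) := mul_le_mul_right hUlt.le _
      _ = ENNReal.ofReal ε * volume E' + ENNReal.ofReal ε * δ := by rw [mul_add]
      _ ≤ ENNReal.ofReal ε * volume E' + δ := by
          refine add_le_add_right ?_ _
          calc ENNReal.ofReal ε * δ ≤ 1 * δ :=
                mul_le_mul_left (ENNReal.ofReal_le_one.2 hε1.le) _
            _ = δ := one_mul _
  have h1 : volume E' ≤ ENNReal.ofReal ε * volume E' :=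
    ENNReal.le_of_forall_pos_le_add (fun δ hδ _ => main δ hδ)
  by_contra h0
  have hlt : ENNReal.ofReal ε * volume E' < 1 * volume E' :=
    ENNReal.mul_lt_mul_left h0 hE'fin (ENNReal.ofReal_lt_one.2 hε1)
  rw [one_mul] at hlt
  exact absurd h1 (not_le.2 hlt)

lemma vol_pK_five {r : ℝ} (hr : 0 < r) (z : Pt n × ℝ) :
    volume (pK n (5 * r) z) = ENNReal.ofReal ((5:ℝ) ^ (n + 2)) * volume (pK n r z) := by
  rw [vol_pK hr, vol_pK (by linarith : (0:ℝ) < 5 * r), ← mul_assoc,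
    ← ENNReal.ofReal_mul (by positivity), mul_pow]

lemma vol_pK_pos {r : ℝ} (hr : 0 < r) (z : Pt n × ℝ) : 0 < volume (pK n r z) := by
  rw [vol_pK hr]
  exact ENNReal.mul_pos (ENNReal.ofReal_pos.2 (by positivity)).ne' Bv_pos.ne'

theorem main_vitali
    (n : ℕ) (ε : ℝ) (hε0 : 0 < ε) (hε1 : ε < 1)
    (E F : Set (Pt n × ℝ)) (hEm : MeasurableSet E) (hFm : MeasurableSet F)
    (hEF : E ⊆ F) (hFQ : F ⊆ (pQ n 1 0))
    (hsmall : volume E < ENNReal.ofReal ε * volume (pQ n 1 0))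
    (hcov : ∀ z ∈ (pQ n 1 0), ∀ r : ℝ, 0 < r → r ≤ 1 →
      ENNReal.ofReal ε * volume (pK n r z) ≤ volume (E ∩ pK n r z) →
      pK n r z ∩ (pQ n 1 0) ⊆ F) :
    volume E ≤ ENNReal.ofReal ((10 : ℝ) ^ (n + 2) * ε) * volume F := by
  set ε' := ENNReal.ofReal ε with hε'
  have hEQ : E ⊆ pQ n 1 0 := hEF.trans hFQ
  have hEfin : volume E ≠ ∞ := by
    refine ne_top_of_le_ne_top ?_ (measure_mono hEQ)
    rw [vol_pQ1]
    exact Bv_ne_top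
  -- the good set
  set G : Set (Pt n × ℝ) := {z | z ∈ E ∧ ∃ r : ℝ, 0 < r ∧ r ≤ 1 ∧
    ε' * volume (pK n r z) ≤ volume (E ∩ pK n r z)} with hG
  have hGE : G ⊆ E := fun z hz => hz.1
  have hbad : volume (E \ G) = 0 := by
    refine measure_mono_null ?_ (bad_null hε0 hε1 hEfin)
    intro z hz
    refine ⟨hz.1, fun r hr0 hr1 => ?_⟩
    by_contra hcon
    exact hz.2 ⟨hz.1, r, hr0, hr1, not_lt.1 hcon⟩
  -- choice of radii
  have hrad : ∀ z ∈ G, ∃ r : ℝ, (0 < r ∧ r ≤ 1 ∧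
      ε' * volume (pK n r z) ≤ volume (E ∩ pK n r z)) ∧
      (∀ r' : ℝ, 2 * r < r' → volume (E ∩ pK n r' z) ≤ ε' * volume (pK n r' z)) := by
    rintro z ⟨hzE, r₀, hr₀0, hr₀1, hr₀d⟩
    set S : Set ℝ := {r : ℝ | 0 < r ∧ r ≤ 1 ∧ ε' * volume (pK n r z) ≤ volume (E ∩ pK n r z)}
      with hS
    have hSne : S.Nonempty := ⟨r₀, hr₀0, hr₀1, hr₀d⟩
    have hSbdd : BddAbove S := ⟨1, fun r hr => hr.2.1⟩
    have hRpos : 0 < sSup S := lt_of_lt_of_le hr₀0 (le_csSup hSbdd ⟨hr₀0, hr₀1, hr₀d⟩)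
    obtain ⟨r, hrS, hrgt⟩ := exists_lt_of_lt_csSup hSne (half_lt_self hRpos)
    refine ⟨r, ⟨hrS.1, hrS.2.1, hrS.2.2⟩, fun r' hr' => ?_⟩
    have hr'0 : 0 < r' := lt_trans (by linarith [hrS.1] : (0:ℝ) < 2 * r) hr'
    have hr'R : sSup S < r' := by
      have : sSup S < 2 * r := by linarith
      linarith
    rcases le_or_gt r' 1 with h1 | h1
    · by_contra hcon
      have hr'S : r' ∈ S := ⟨hr'0, h1, not_le.1 hcon |>.le⟩
      exact absurd (le_csSup hSbdd hr'S) (not_le.2 hr'R)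
    · calc volume (E ∩ pK n r' z) ≤ volume E := measure_mono inter_subset_left
        _ ≤ ε' * volume (pQ n 1 0) := hsmall.le
        _ = ε' * volume (pK n 1 z) := by rw [vol_pQ1, vol_pK one_pos, one_pow, ENNReal.ofReal_one,
              one_mul]
        _ ≤ ε' * volume (pK n r' z) := mul_le_mul_right
              (measure_mono (pK_mono z zero_le_one h1.le)) _
  choose! rad hradP using hrad
  -- Vitali enlargement lemma
  obtain ⟨u, hut, hudisj, hucov⟩ :=
    Vitali.exists_disjoint_subfamily_covering_enlargement
      (fun z : Pt n × ℝ => pK n (rad z) z) G rad 2 one_lt_two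
      (fun z hz => ((hradP z hz).1.1).le) 1 (fun z hz => (hradP z hz).1.2.1)
      (fun z hz => ⟨z, mem_pK_self (hradP z hz).1.1 z⟩)
  -- countability of u
  have hucnt : u.Countable := by
    have hpw : Pairwise (Function.onFun Disjoint fun b : ↥u => pK n (rad (b : Pt n × ℝ)) (b : Pt n × ℝ)) := by
      intro i j hij
      exact hudisj i.2 j.2 (fun h => hij (Subtype.ext h))
    have hcnt := MeasureTheory.Measure.countable_meas_pos_of_disjoint_iUnion
      (μ := (volume : Measure (Pt n × ℝ)))
      (As := fun b : ↥u => pK n (rad (b : Pt n × ℝ)) (b : Pt n × ℝ))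
      (fun b => measurableSet_pK _) hpw
    have huniv : {i : ↥u | 0 < volume (pK n (rad (i : Pt n × ℝ)) (i : Pt n × ℝ))} = univ := by
      refine eq_univ_of_forall fun b => ?_
      exact vol_pK_pos (hradP (b : Pt n × ℝ) (hut b.2)).1.1 _
    rw [huniv] at hcnt
    exact Set.countable_coe_iff.1 (Set.countable_univ_iff.1 hcnt)
  -- covering of G by enlarged cylinders
  have hcover : G ⊆ ⋃ b ∈ u, pK n (5 * rad b) b := by
    intro z hz
    obtain ⟨b, hbu, hnei, hle⟩ := hucov z hz
    exact mem_biUnion hbu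
      (pK_subset_of_inter (hradP b (hut hbu)).1.1 hle hnei (mem_pK_self (hradP z hz).1.1 z))
  have hEsub : E ⊆ (E \ G) ∪ (⋃ b ∈ u, E ∩ pK n (5 * rad b) b) := by
    intro z hz
    by_cases hzG : z ∈ G
    · obtain ⟨b, hbu, hbm⟩ := mem_iUnion₂.1 (hcover hzG)
      exact Or.inr (mem_biUnion hbu ⟨hz, hbm⟩)
    · exact Or.inl ⟨hz, hzG⟩
  -- the constant
  set c : ℝ≥0∞ := ε' * (ENNReal.ofReal ((5:ℝ) ^ (n + 2)) * 2 ^ (n + 1)) with hc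
  -- termwise estimate
  have hterm : ∀ b ∈ u, volume (E ∩ pK n (5 * rad b) b) ≤
      c * volume (pK n (rad b) b ∩ pQ n 1 0) := by
    intro b hbu
    have hbG : b ∈ G := hut hbu
    have hb0 : 0 < rad b := (hradP b hbG).1.1
    have hb1 : rad b ≤ 1 := (hradP b hbG).1.2.1
    have hbQ : b ∈ pQ n 1 0 := hEQ (hGE hbG)
    calc volume (E ∩ pK n (5 * rad b) b) ≤ ε' * volume (pK n (5 * rad b) b) :=
          (hradP b hbG).2 (5 * rad b) (by linarith)
      _ = ε' * (ENNReal.ofReal ((5:ℝ) ^ (n + 2)) * volume (pK n (rad b) b)) := by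
          rw [vol_pK_five hb0]
      _ ≤ ε' * (ENNReal.ofReal ((5:ℝ) ^ (n + 2)) *
            (2 ^ (n + 1) * volume (pK n (rad b) b ∩ pQ n 1 0))) := by
          exact mul_le_mul_right (mul_le_mul_right (vol_pK_inter_pQ hbQ hb0 hb1) _) _
      _ = c * volume (pK n (rad b) b ∩ pQ n 1 0) := by rw [hc]; ring
  -- disjoint union inside F
  have hsubF : ∀ b ∈ u, pK n (rad b) b ∩ pQ n 1 0 ⊆ F := by
    intro b hbu
    have hbG : b ∈ G := hut hbu
    exact hcov b (hEQ (hGE hbG)) (rad b) (hradP b hbG).1.1 (hradP b hbG).1.2.1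
      (hradP b hbG).1.2.2
  have hdisj' : u.PairwiseDisjoint (fun b => pK n (rad b) b ∩ pQ n 1 0) :=
    hudisj.mono_on (fun b _ => inter_subset_left)
  -- main chain
  calc volume E ≤ volume ((E \ G) ∪ (⋃ b ∈ u, E ∩ pK n (5 * rad b) b)) := measure_mono hEsub
    _ ≤ volume (E \ G) + volume (⋃ b ∈ u, E ∩ pK n (5 * rad b) b) := measure_union_le _ _
    _ = volume (⋃ b ∈ u, E ∩ pK n (5 * rad b) b) := by rw [hbad, zero_add]
    _ ≤ ∑' b : u, volume (E ∩ pK n (5 * rad (b : Pt n × ℝ)) (b : Pt n × ℝ)) :=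
        measure_biUnion_le volume hucnt _
    _ ≤ ∑' b : u, c * volume (pK n (rad (b : Pt n × ℝ)) (b : Pt n × ℝ) ∩ pQ n 1 0) :=
        ENNReal.tsum_le_tsum (fun b => hterm b b.2)
    _ = c * ∑' b : u, volume (pK n (rad (b : Pt n × ℝ)) (b : Pt n × ℝ) ∩ pQ n 1 0) :=
        ENNReal.tsum_mul_left
    _ = c * volume (⋃ b ∈ u, pK n (rad b) b ∩ pQ n 1 0) := by
        rw [measure_biUnion hucnt hdisj'
          (fun b _ => (measurableSet_pK b).inter (measurableSet_ball.prod measurableSet_Ioc))]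
    _ ≤ c * volume F := mul_le_mul_right (measure_mono (iUnion₂_subset hsubF)) _
    _ ≤ ENNReal.ofReal ((10 : ℝ) ^ (n + 2) * ε) * volume F := by
        refine mul_le_mul_left ?_ _
        rw [hc, hε']
        have h2e : ((2:ℝ≥0∞) ^ (n + 1)) = ENNReal.ofReal ((2:ℝ) ^ (n + 1)) := by
          rw [ENNReal.ofReal_pow (by norm_num)]
          norm_num
        rw [h2e, ← ENNReal.ofReal_mul (by positivity), ← ENNReal.ofReal_mul hε0.le]
        refine ENNReal.ofReal_le_ofReal ?_
        have h2pow : (2:ℝ) ^ (n + 1) ≤ 2 ^ (n + 2) := by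
          refine pow_le_pow_right₀ (by norm_num) (by omega)
        calc ε * ((5:ℝ) ^ (n + 2) * 2 ^ (n + 1)) ≤ ε * ((5:ℝ) ^ (n + 2) * 2 ^ (n + 2)) := by
              refine mul_le_mul_of_nonneg_left (mul_le_mul_of_nonneg_left h2pow (by positivity))
                hε0.le
          _ = (10 : ℝ) ^ (n + 2) * ε := by
              rw [← mul_pow]
              norm_num
              ring

end MVC

/-- **Lemma 2.4** (modified Vitali covering lemma / crawling of ink spots). -/
theorem modified_vitali_covering
    (n : ℕ) (hn : 2 ≤ n) (ε : ℝ) (hε0 : 0 < ε) (hε1 : ε < 1)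
    (E F : Set (Pt n × ℝ)) (hEm : MeasurableSet E) (hFm : MeasurableSet F)
    (hEF : E ⊆ F) (hFQ : F ⊆ (pQ n 1 0))
    (hsmall : volume E < ENNReal.ofReal ε * volume (pQ n 1 0))
    (hcov : ∀ z ∈ (pQ n 1 0), ∀ r : ℝ, 0 < r → r ≤ 1 →
      ENNReal.ofReal ε * volume (pK n r z) ≤ volume (E ∩ pK n r z) →
      pK n r z ∩ (pQ n 1 0) ⊆ F) :
    volume E ≤ ENNReal.ofReal ((10 : ℝ) ^ (n + 2) * ε) * volume F :=
  MVC.main_vitali n ε hε0 hε1 E F hEm hFm hEF hFQ hsmall hcov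

end
end
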